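/- arXiv:2605.26973 — 2 statements merged into one kernel-verified Lean document; each statement's English description precedes it below -/
import Mathlib

section
/- For α > 1, the Marchenko–Pastur integral of 1/λ over the bulk equals 1/(α - 1): ∫_{λ₋}^{λ₊} (1/λ)·(√((λ₊ - λ)(λ - λ₋))/(2πλ)) dλ = 1/(α - 1), where λ± = (1 ± √α)². -/
/-!
Writing `a, b = (1 ∓ √α)²`, the integrand is `(2π)⁻¹ √((b - x)(x - a)) / x²`, which has the
elementary primitive
`-√((b - x)(x - a)) / x - arcsin (u x) - (a + b)/(2√(ab)) · arcsin (u (ab/x))`,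
where `u (x) = (2x - a - b)/(b - a)` and `x ↦ ab/x` is the inversion exchanging `a` and `b`.
Both arcsines run between `±π/2`, so `∫ₐᵇ √((b - x)(x - a)) / x² = π ((a + b)/(2√(ab)) - 1)`;
with `ab = (α - 1)²` and `a + b = 2(α + 1)` this is `2π/(α - 1)`.
-/

open Real Set

theorem HasDerivAt.arcsin_div {f : ℝ → ℝ} {f' x n d s : ℝ} (hf : HasDerivAt f f' x)
    (hfx : f x = n / d) (hd : 0 < d) (hs : 0 < s) (hleg : d ^ 2 - n ^ 2 = s ^ 2) :
    HasDerivAt (fun y => arcsin (f y)) (d / s * f') x := by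
  have hsq : 1 - f x ^ 2 = (s / d) ^ 2 := by
    rw [hfx, div_pow, div_pow, eq_div_iff (by positivity), ← hleg]
    field_simp
  have hne : f x ^ 2 ≠ 1 := fun h => by
    have : 0 < (s / d) ^ 2 := by positivity
    linarith
  have h₁ : f x ≠ -1 := fun h => hne (by rw [h]; norm_num)
  have h₂ : f x ≠ 1 := fun h => hne (by rw [h]; norm_num)
  refine ((hasDerivAt_arcsin h₁ h₂).comp x hf).congr_deriv ?_
  rw [hsq, sqrt_sq (by positivity), one_div_div]

section

variable {a b x : ℝ}

theorem hasDerivAt_neg_sqrt_div (ha : 0 < a) (hx : x ∈ Ioo a b) :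
    HasDerivAt (fun y => -√((b - y) * (y - a)) / y)
      (((a + b) * x - 2 * (a * b)) / (2 * √((b - x) * (x - a)) * x ^ 2)) x := by
  have hx0 : 0 < x := ha.trans hx.1
  have hq : 0 < (b - x) * (x - a) := mul_pos (sub_pos.2 hx.2) (sub_pos.2 hx.1)
  have hf : HasDerivAt (fun y => (b - y) * (y - a)) (a + b - 2 * x) x := by
    refine ((hasDerivAt_id' x).const_sub b).mul ((hasDerivAt_id' x).sub_const a) |>.congr_deriv ?_
    ring
  refine (hf.sqrt hq.ne').neg.div (hasDerivAt_id' x) hx0.ne' |>.congr_deriv ?_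
  simp only [Pi.neg_apply]
  field_simp
  linear_combination 2 * sq_sqrt hq.le

theorem hasDerivAt_arcsin_chord (hx : x ∈ Ioo a b) :
    HasDerivAt (fun y => arcsin ((2 * y - (a + b)) / (b - a))) (1 / √((b - x) * (x - a))) x := by
  have hq : 0 < (b - x) * (x - a) := mul_pos (sub_pos.2 hx.2) (sub_pos.2 hx.1)
  have hba : 0 < b - a := sub_pos.2 (hx.1.trans hx.2)
  have hf : HasDerivAt (fun y => (2 * y - (a + b)) / (b - a)) (2 / (b - a)) x := by
    simpa using (((hasDerivAt_id' x).const_mul 2).sub_const (a + b)).div_const (b - a)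
  refine (hf.arcsin_div rfl hba (by positivity : 0 < 2 * √((b - x) * (x - a))) ?_).congr_deriv ?_
  · linear_combination (-4) * sq_sqrt hq.le
  · field_simp

theorem hasDerivAt_arcsin_inversion (ha : 0 < a) (hx : x ∈ Ioo a b) :
    HasDerivAt (fun y => arcsin ((2 * (a * b) - (a + b) * y) / (y * (b - a))))
      (-√(a * b) / (x * √((b - x) * (x - a)))) x := by
  have hx0 : 0 < x := ha.trans hx.1
  have hq : 0 < (b - x) * (x - a) := mul_pos (sub_pos.2 hx.2) (sub_pos.2 hx.1)
  have hba : 0 < b - a := sub_pos.2 (hx.1.trans hx.2)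
  have hab : 0 < a * b := mul_pos ha (ha.trans (hx.1.trans hx.2))
  have hf : HasDerivAt (fun y => (2 * (a * b) - (a + b) * y) / (y * (b - a)))
      (-2 * (a * b) / (x ^ 2 * (b - a))) x := by
    refine (((hasDerivAt_id' x).const_mul (a + b)).const_sub (2 * (a * b))).div
      ((hasDerivAt_id' x).mul_const (b - a)) (by positivity) |>.congr_deriv ?_
    field_simp
    ring
  have hc := sqrt_pos.2 hab
  refine (hf.arcsin_div rfl (by positivity)
    (by positivity : 0 < 2 * √(a * b) * √((b - x) * (x - a))) ?_).congr_deriv ?_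
  · linear_combination (-4 * √(a * b) ^ 2) * sq_sqrt hq.le + (-4 * (b - x) * (x - a)) * sq_sqrt hab.le
  · have hc2 := sq_sqrt hab.le
    set c := √(a * b)
    field_simp
    linear_combination hc2

noncomputable def sqrtDivSqPrimitive (a b y : ℝ) : ℝ :=
  -√((b - y) * (y - a)) / y - arcsin ((2 * y - (a + b)) / (b - a))
    - (a + b) / (2 * √(a * b)) * arcsin ((2 * (a * b) - (a + b) * y) / (y * (b - a)))

theorem hasDerivAt_sqrtDivSqPrimitive (ha : 0 < a) (hx : x ∈ Ioo a b) :
    HasDerivAt (sqrtDivSqPrimitive a b) (√((b - x) * (x - a)) / x ^ 2) x := by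
  refine ((hasDerivAt_neg_sqrt_div ha hx).sub (hasDerivAt_arcsin_chord hx)).sub
    ((hasDerivAt_arcsin_inversion ha hx).const_mul _) |>.congr_deriv ?_
  have hq : 0 < (b - x) * (x - a) := mul_pos (sub_pos.2 hx.2) (sub_pos.2 hx.1)
  have hx0 : 0 < x := ha.trans hx.1
  have hc := sqrt_pos.2 (mul_pos ha (ha.trans (hx.1.trans hx.2)))
  field_simp
  linear_combination (-2) * sq_sqrt hq.le

theorem continuousOn_sqrtDivSqPrimitive (ha : 0 < a) (hab : a < b) :
    ContinuousOn (sqrtDivSqPrimitive a b) (Icc a b) := by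
  have hne : ∀ y ∈ Icc a b, y ≠ 0 := fun y hy => (ha.trans_le hy.1).ne'
  unfold sqrtDivSqPrimitive
  refine ContinuousOn.sub (ContinuousOn.sub ?_ (by fun_prop)) (continuousOn_const.mul ?_)
  · exact ContinuousOn.div (by fun_prop) continuousOn_id hne
  · exact continuous_arcsin.comp_continuousOn <| ContinuousOn.div (by fun_prop) (by fun_prop)
      fun y hy => mul_ne_zero (hne y hy) (sub_pos.2 hab).ne'

theorem integral_sqrt_mul_div_sq (ha : 0 < a) (hab : a < b) :
    ∫ x in a..b, √((b - x) * (x - a)) / x ^ 2 = π * ((a + b) / (2 * √(a * b)) - 1) := by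
  have hint : IntervalIntegrable (fun x => √((b - x) * (x - a)) / x ^ 2) MeasureTheory.volume a b :=
    ContinuousOn.intervalIntegrable <| ContinuousOn.div (by fun_prop) (by fun_prop) fun y hy =>
      pow_ne_zero 2 (ha.trans_le (uIcc_of_le hab.le ▸ hy).1).ne'
  rw [intervalIntegral.integral_eq_sub_of_hasDerivAt_of_le hab.le
    (continuousOn_sqrtDivSqPrimitive ha hab) (fun x hx => hasDerivAt_sqrtDivSqPrimitive ha hx) hint]
  have hba : b - a ≠ 0 := (sub_pos.2 hab).ne'
  have e1 : (2 * b - (a + b)) / (b - a) = 1 := by field_simp; ring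
  have e2 : (2 * (a * b) - (a + b) * b) / (b * (b - a)) = -1 := by
    field_simp [(ha.trans hab).ne']; ring
  have e3 : (2 * a - (a + b)) / (b - a) = -1 := by field_simp; ring
  have e4 : (2 * (a * b) - (a + b) * a) / (a * (b - a)) = 1 := by field_simp [ha.ne']; ring
  simp only [sqrtDivSqPrimitive, e1, e2, e3, e4, arcsin_one, arcsin_neg_one, sub_self, mul_zero,
    zero_mul, sqrt_zero, neg_zero, zero_div]
  ring

end

/-- **Marchenko–Pastur integral of `1/λ`, underparameterized case.**
For `α > 1`, with `λ± = (1 ± √α)²`,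
`∫_{λ₋}^{λ₊} (1/λ)·√((λ₊-λ)(λ-λ₋))/(2πλ) dλ = 1/(α-1)`. -/
theorem marchenko_pastur_inverse_moment_underparameterized
    (α : ℝ) (hα : 1 < α) :
    ∫ lam in ((1 - Real.sqrt α) ^ 2)..((1 + Real.sqrt α) ^ 2),
      lam⁻¹ * (Real.sqrt (((1 + Real.sqrt α) ^ 2 - lam) * (lam - (1 - Real.sqrt α) ^ 2)) /
        (2 * π * lam))
      = 1 / (α - 1) := by
  have hs : 1 < √α := by simpa using sqrt_lt_sqrt zero_le_one hα
  have hα2 : √α ^ 2 = α := sq_sqrt (by linarith)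
  have hpos : 0 < (1 - √α) ^ 2 := by nlinarith
  have hlt : (1 - √α) ^ 2 < (1 + √α) ^ 2 := by nlinarith
  have hprod : √((1 - √α) ^ 2 * (1 + √α) ^ 2) = α - 1 := by
    rw [← mul_pow, sqrt_sq_eq_abs, abs_of_nonpos] <;> nlinarith
  simp_rw [show ∀ lam : ℝ, lam⁻¹ * (√(((1 + √α) ^ 2 - lam) * (lam - (1 - √α) ^ 2)) / (2 * π * lam))
      = (2 * π)⁻¹ * (√(((1 + √α) ^ 2 - lam) * (lam - (1 - √α) ^ 2)) / lam ^ 2) from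
    fun lam => by ring]
  rw [intervalIntegral.integral_const_mul, integral_sqrt_mul_div_sq hpos hlt, hprod]
  have hα1 : α - 1 ≠ 0 := by linarith
  field_simp
  linear_combination 2 * hα2
end

section
/- For 0 < α < 1, with λ± = (1 ± √α)², the Marchenko–Pastur integral of 1/λ over the bulk satisfies ∫_{λ₋}^{λ₊} (1/λ)·(√((λ₊-λ)(λ-λ₋))/(2πλ)) dλ = α/(1-α). -/
open Real

lemma mp_aux_integral (a b t : ℝ) (ha : 0 < a) (hab : a < b) (ht : 0 < t)
    (hts : t ^ 2 = a * b) :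
    ∫ x in a..b, x⁻¹ * (Real.sqrt ((b - x) * (x - a)) / (2 * π * x))
      = ((a + b) / (2 * t) - 1) / 2 := by
  have hba : 0 < b - a := by linarith
  have hpi : (0:ℝ) < π := Real.pi_pos
  set c : ℝ := (a + b) / (2 * t) with hc_def
  set F : ℝ → ℝ := fun x => (2 * π)⁻¹ *
      (-Real.sqrt ((b - x) * (x - a)) / x
        - Real.arcsin ((2 * x - (a + b)) / (b - a))
        + c * Real.arcsin (((a + b) * x - 2 * (a * b)) / ((b - a) * x))) with hF_def
  have hderiv : ∀ x ∈ Set.Ioo a b, HasDerivAt F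
      (x⁻¹ * (Real.sqrt ((b - x) * (x - a)) / (2 * π * x))) x := by
    intro x hx
    obtain ⟨hxa, hxb⟩ := hx
    have hx0 : 0 < x := lt_trans ha hxa
    have hP : 0 < (b - x) * (x - a) := mul_pos (by linarith) (by linarith)
    set R := Real.sqrt ((b - x) * (x - a)) with hR_def
    have hR0 : 0 < R := Real.sqrt_pos.mpr hP
    have hRsq : R ^ 2 = (b - x) * (x - a) := Real.sq_sqrt hP.le
    set u : ℝ := (2 * x - (a + b)) / (b - a) with hu_def
    have hu_lt : u < 1 := by
      rw [hu_def, div_lt_one hba]; linarith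
    have hu_gt : -1 < u := by
      rw [hu_def, lt_div_iff₀ hba]; linarith
    have h1u : Real.sqrt (1 - u ^ 2) = 2 * R / (b - a) := by
      have h : 1 - u ^ 2 = (2 * R / (b - a)) ^ 2 := by
        rw [hu_def]
        field_simp
        linear_combination (-4:ℝ) * hRsq
      rw [h, Real.sqrt_sq (by positivity)]
    set v : ℝ := ((a + b) * x - 2 * (a * b)) / ((b - a) * x) with hv_def
    have hvx : (b - a) * x ≠ 0 := by positivity
    have hveq : 1 - v ^ 2 = (2 * t * R / ((b - a) * x)) ^ 2 := by
      rw [hv_def]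
      field_simp
      linear_combination (-4 * R ^ 2) * hts + (-4 * a * b) * hRsq
    have h1v : Real.sqrt (1 - v ^ 2) = 2 * t * R / ((b - a) * x) := by
      rw [hveq, Real.sqrt_sq (by positivity)]
    have hv2 : v ^ 2 < 1 := by
      have hpos : 0 < (2 * t * R / ((b - a) * x)) ^ 2 := by positivity
      nlinarith
    have hv_lt : v < 1 := by nlinarith
    have hv_gt : -1 < v := by nlinarith
    have d1 : HasDerivAt (fun y => (b - y) * (y - a)) (a + b - 2 * x) x := by
      have h := ((hasDerivAt_id x).const_sub b).mul ((hasDerivAt_id x).sub_const a)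
      refine h.congr_deriv ?_; simp only [id_eq]; ring
    have dR : HasDerivAt (fun y => Real.sqrt ((b - y) * (y - a)))
        ((a + b - 2 * x) / (2 * R)) x := d1.sqrt hP.ne'
    have dg1 : HasDerivAt (fun y => -Real.sqrt ((b - y) * (y - a)) / y)
        ((-((a + b - 2 * x) / (2 * R)) * x - -R * 1) / x ^ 2) x :=
      HasDerivAt.div dR.neg (hasDerivAt_id x) hx0.ne'
    have du : HasDerivAt (fun y => (2 * y - (a + b)) / (b - a)) (2 / (b - a)) x := by
      have h := (((hasDerivAt_id x).const_mul 2).sub_const (a + b)).div_const (b - a)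
      refine h.congr_deriv ?_; ring
    have dg2 : HasDerivAt (fun y => Real.arcsin ((2 * y - (a + b)) / (b - a)))
        (1 / Real.sqrt (1 - u ^ 2) * (2 / (b - a))) x :=
      by have h := Real.hasDerivAt_arcsin hu_gt.ne' hu_lt.ne; rw [hu_def] at h ⊢; exact h.comp x du
    have dv : HasDerivAt (fun y => ((a + b) * y - 2 * (a * b)) / ((b - a) * y))
        (((a + b) * ((b - a) * x) - ((a + b) * x - 2 * (a * b)) * (b - a)) / ((b - a) * x) ^ 2)
        x := by
      have hnum : HasDerivAt (fun y => (a + b) * y - 2 * (a * b)) (a + b) x := by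
        have h := ((hasDerivAt_id x).const_mul (a + b)).sub_const (2 * (a * b))
        refine h.congr_deriv ?_; ring
      have hden : HasDerivAt (fun y => (b - a) * y) (b - a) x := by
        have h := (hasDerivAt_id x).const_mul (b - a)
        refine h.congr_deriv ?_; ring
      exact hnum.div hden hvx
    have dg3 : HasDerivAt (fun y => c * Real.arcsin (((a + b) * y - 2 * (a * b)) / ((b - a) * y)))
        (c * (1 / Real.sqrt (1 - v ^ 2) *
          (((a + b) * ((b - a) * x) - ((a + b) * x - 2 * (a * b)) * (b - a)) / ((b - a) * x) ^ 2)))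
        x :=
      by have h := Real.hasDerivAt_arcsin hv_gt.ne' hv_lt.ne; rw [hv_def] at h ⊢; exact (h.comp x dv).const_mul c
    have dF := ((dg1.sub dg2).add dg3).const_mul ((2 * π)⁻¹)
    refine dF.congr_deriv ?_
    simp only [hc_def]
    rw [h1u, h1v]
    rw [show (a + b) * ((b - a) * x) - ((a + b) * x - 2 * (a * b)) * (b - a)
        = 2 * (a * b) * (b - a) by ring]
    have E3 : (a + b) / (2 * t) * (1 / (2 * t * R / ((b - a) * x)) *
        (2 * (a * b) * (b - a) / ((b - a) * x) ^ 2)) = (a + b) / (2 * x * R) := by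
      rw [← hts]; field_simp
    rw [E3]
    field_simp
    ring
  have hcont : ContinuousOn F (Set.Icc a b) := by
    apply ContinuousOn.mul continuousOn_const
    apply ContinuousOn.add
    · apply ContinuousOn.sub
      · exact ContinuousOn.div
          (((continuous_const.sub continuous_id).mul
            (continuous_id.sub continuous_const)).sqrt.neg.continuousOn)
          continuous_id.continuousOn
          (fun x hx => ne_of_gt (lt_of_lt_of_le ha hx.1))
      · exact (Real.continuous_arcsin.comp
          ((((continuous_const.mul continuous_id)).sub continuous_const).div_const (b - a))).continuousOn
    · apply ContinuousOn.mul continuousOn_const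
      apply Real.continuous_arcsin.comp_continuousOn
      apply ContinuousOn.div
      · exact (((continuous_const.mul continuous_id)).sub continuous_const).continuousOn
      · exact ((continuous_const.mul continuous_id)).continuousOn
      · intro x hx
        have : 0 < x := lt_of_lt_of_le ha hx.1
        positivity
  have hint : IntervalIntegrable
      (fun lam => lam⁻¹ * (Real.sqrt ((b - lam) * (lam - a)) / (2 * π * lam)))
      MeasureTheory.volume a b := by
    apply ContinuousOn.intervalIntegrable
    rw [Set.uIcc_of_le hab.le]
    apply ContinuousOn.mul
    · exact ContinuousOn.inv₀ continuous_id.continuousOn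
        (fun x hx => ne_of_gt (lt_of_lt_of_le ha hx.1))
    · apply ContinuousOn.div
      · exact (((continuous_const.sub continuous_id).mul
          (continuous_id.sub continuous_const)).sqrt).continuousOn
      · exact ((continuous_const.mul continuous_id)).continuousOn
      · intro x hx
        have hx0 : 0 < x := lt_of_lt_of_le ha hx.1
        positivity
  have key : (∫ lam in a..b,
      lam⁻¹ * (Real.sqrt ((b - lam) * (lam - a)) / (2 * π * lam))) = F b - F a :=
    intervalIntegral.integral_eq_sub_of_hasDeriv_right_of_le hab.le hcont
      (fun x hx => (hderiv x hx).hasDerivWithinAt) hint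
  rw [key, hF_def]
  have hb0 : 0 < b := lt_trans ha hab
  have e1 : Real.sqrt ((b - b) * (b - a)) = 0 := by simp
  have e2 : Real.sqrt ((b - a) * (a - a)) = 0 := by simp
  have e3 : (2 * b - (a + b)) / (b - a) = 1 := by
    rw [show 2 * b - (a + b) = b - a by ring, div_self hba.ne']
  have e4 : (2 * a - (a + b)) / (b - a) = -1 := by
    rw [show 2 * a - (a + b) = -(b - a) by ring, neg_div, div_self hba.ne']
  have e5 : ((a + b) * b - 2 * (a * b)) / ((b - a) * b) = 1 := by
    rw [show (a + b) * b - 2 * (a * b) = (b - a) * b by ring, div_self (by positivity)]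
  have e6 : ((a + b) * a - 2 * (a * b)) / ((b - a) * a) = -1 := by
    rw [show (a + b) * a - 2 * (a * b) = -((b - a) * a) by ring, neg_div,
      div_self (by positivity)]
  simp only [e1, e2, e3, e4, e5, e6, Real.arcsin_one, Real.arcsin_neg_one, zero_div, neg_zero]
  rw [hc_def]
  field_simp
  ring

/-- **Marchenko–Pastur integral of `1/λ`, overparameterized case.**
For `0 < α < 1`, with `λ± = (1 ± √α)²` (the continuous bulk carrying mass `α`, the atom
of mass `1-α` at `λ = 0` being excluded),
`∫_{λ₋}^{λ₊} (1/λ)·√((λ₊-λ)(λ-λ₋))/(2πλ) dλ = α/(1-α)`. -/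
theorem marchenko_pastur_inverse_moment_overparameterized
    (α : ℝ) (hα0 : 0 < α) (hα1 : α < 1) :
    ∫ lam in ((1 - Real.sqrt α) ^ 2)..((1 + Real.sqrt α) ^ 2),
      lam⁻¹ * (Real.sqrt (((1 + Real.sqrt α) ^ 2 - lam) * (lam - (1 - Real.sqrt α) ^ 2)) /
        (2 * π * lam))
      = α / (1 - α) := by
  have hs0 : 0 < Real.sqrt α := Real.sqrt_pos.mpr hα0
  have hs1 : Real.sqrt α < 1 := by
    have := Real.sqrt_lt_sqrt hα0.le hα1
    simpa using this
  have hsq : Real.sqrt α ^ 2 = α := Real.sq_sqrt hα0.le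
  have ha : 0 < (1 - Real.sqrt α) ^ 2 := by
    have : (0:ℝ) < 1 - Real.sqrt α := by linarith
    positivity
  have hab : (1 - Real.sqrt α) ^ 2 < (1 + Real.sqrt α) ^ 2 := by nlinarith
  have ht : (0:ℝ) < 1 - α := by linarith
  have hts : (1 - α) ^ 2 = (1 - Real.sqrt α) ^ 2 * (1 + Real.sqrt α) ^ 2 := by
    have h : (1 - Real.sqrt α) ^ 2 * (1 + Real.sqrt α) ^ 2 = (1 - Real.sqrt α ^ 2) ^ 2 := by
      ring
    rw [h, hsq]
  rw [mp_aux_integral _ _ _ ha hab ht hts]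
  have hab2 : (1 - Real.sqrt α) ^ 2 + (1 + Real.sqrt α) ^ 2 = 2 * (1 + α) := by
    have h : (1 - Real.sqrt α) ^ 2 + (1 + Real.sqrt α) ^ 2 = 2 * (1 + Real.sqrt α ^ 2) := by
      ring
    rw [h, hsq]
  rw [hab2]
  field_simp
  ring
end
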